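/- (Schur-complement reduction of the SDP-relaxation LMI) Let P₀ be a symmetric positive definite n×n matrix, x̃₀ ∈ ℝⁿ a vector, and λ₁, …, λₘ ≥ 0 scalars. Then the (2n+1)×(2n+1) block matrix K(P₀, x̃₀, λ) is negative semidefinite if and only if the (n+1)×(n+1) block matrix N(P₀, x̃₀, λ) is positive semidefinite. -/

import Mathlib

open Matrix

/-- The symmetric `(2n+1) × (2n+1)` block matrix `K(P₀, x̃₀, λ)` of the SDP relaxation:
`[[P₀⁻¹ - Σᵢ λᵢ Pᵢ⁻¹, -x̃₀ + Σᵢ λᵢ Pᵢ⁻¹xᵢ, 0],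
  [(-x̃₀ + Σᵢ λᵢ Pᵢ⁻¹xᵢ)ᵀ, -1 - Σᵢ λᵢ(xᵢᵀPᵢ⁻¹xᵢ - 1), x̃₀ᵀ],
  [0, x̃₀, -P₀⁻¹]]`. -/
noncomputable def sdpBlockK {n m : ℕ} (x : Fin m → (Fin n → ℝ))
    (P : Fin m → Matrix (Fin n) (Fin n) ℝ)
    (P₀ : Matrix (Fin n) (Fin n) ℝ) (xt : Fin n → ℝ) (lam : Fin m → ℝ) :
    Matrix (Fin n ⊕ (Unit ⊕ Fin n)) (Fin n ⊕ (Unit ⊕ Fin n)) ℝ :=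
  Matrix.fromBlocks
    (P₀⁻¹ - ∑ i, lam i • (P i)⁻¹)
    (Matrix.fromCols (Matrix.replicateCol Unit (-xt + ∑ i, lam i • ((P i)⁻¹ *ᵥ x i))) 0)
    (Matrix.fromRows (Matrix.replicateRow Unit (-xt + ∑ i, lam i • ((P i)⁻¹ *ᵥ x i))) 0)
    (Matrix.fromBlocks
      (Matrix.of fun _ _ => -1 - ∑ i, lam i * (x i ⬝ᵥ ((P i)⁻¹ *ᵥ x i) - 1))
      (Matrix.replicateRow Unit xt) (Matrix.replicateCol Unit xt) (-P₀⁻¹))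

/-- The symmetric `(n+1) × (n+1)` block matrix `N(P₀, x̃₀, λ)`:
`[[Σᵢ λᵢ Pᵢ⁻¹ - P₀⁻¹, x̃₀ - Σᵢ λᵢ Pᵢ⁻¹xᵢ],
  [(x̃₀ - Σᵢ λᵢ Pᵢ⁻¹xᵢ)ᵀ, 1 + Σᵢ λᵢ(xᵢᵀPᵢ⁻¹xᵢ - 1) - x̃₀ᵀP₀x̃₀]]`. -/
noncomputable def sdpBlockN {n m : ℕ} (x : Fin m → (Fin n → ℝ))
    (P : Fin m → Matrix (Fin n) (Fin n) ℝ)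
    (P₀ : Matrix (Fin n) (Fin n) ℝ) (xt : Fin n → ℝ) (lam : Fin m → ℝ) :
    Matrix (Fin n ⊕ Unit) (Fin n ⊕ Unit) ℝ :=
  Matrix.fromBlocks
    ((∑ i, lam i • (P i)⁻¹) - P₀⁻¹)
    (Matrix.replicateCol Unit (xt - ∑ i, lam i • ((P i)⁻¹ *ᵥ x i)))
    (Matrix.replicateRow Unit (xt - ∑ i, lam i • ((P i)⁻¹ *ᵥ x i)))
    (Matrix.of fun _ _ =>
      1 + (∑ i, lam i * (x i ⬝ᵥ ((P i)⁻¹ *ᵥ x i) - 1)) - xt ⬝ᵥ (P₀ *ᵥ xt))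

/-! The quadratic form of `K` is that of `-N` minus a square: completing the square in the last
block (the Schur complement of `-P₀⁻¹`) gives, for `ζ = (u, t, v)`,
`ζᵀ K ζ = -(u, t)ᵀ N (u, t) - (v - t P₀ x̃₀)ᵀ P₀⁻¹ (v - t P₀ x̃₀)`.
As `P₀⁻¹` is positive definite, `N ⪰ 0` gives `K ⪯ 0`; conversely, `v = t P₀ x̃₀` kills the
square. -/

section BlockQuadraticForm

variable {ι κ R : Type*} [Fintype ι] [Fintype κ] [CommSemiring R]

theorem sumElim_dotProduct_fromBlocks_mulVec_sumElim (A : Matrix ι ι R) (B : Matrix ι κ R)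
    (C : Matrix κ ι R) (D : Matrix κ κ R) (u : ι → R) (v : κ → R) :
    (u ⊕ᵥ v) ⬝ᵥ (fromBlocks A B C D *ᵥ (u ⊕ᵥ v)) =
      u ⬝ᵥ (A *ᵥ u) + u ⬝ᵥ (B *ᵥ v) + v ⬝ᵥ (C *ᵥ u) + v ⬝ᵥ (D *ᵥ v) := by
  rw [fromBlocks_mulVec, sumElim_dotProduct_sumElim, Sum.elim_comp_inl, Sum.elim_comp_inr,
    dotProduct_add, dotProduct_add, ← add_assoc]

theorem dotProduct_replicateCol_mulVec_const (b u : ι → R) (t : R) :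
    u ⬝ᵥ (replicateCol Unit b *ᵥ fun _ => t) = t * (b ⬝ᵥ u) := by
  simp [dotProduct, mulVec, Finset.mul_sum, mul_comm, mul_left_comm]

theorem const_dotProduct_replicateRow_mulVec (b u : ι → R) (t : R) :
    (fun _ : Unit => t) ⬝ᵥ (replicateRow Unit b *ᵥ u) = t * (b ⬝ᵥ u) := by
  simp [dotProduct, mulVec]

theorem const_dotProduct_of_const_mulVec_const (c t : R) :
    (fun _ : Unit => t) ⬝ᵥ (of (fun _ _ : Unit => c) *ᵥ fun _ => t) = c * t * t := by
  simp [dotProduct, mulVec]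
  ring

end BlockQuadraticForm

theorem sub_smul_mulVec_dotProduct_inv_mulVec {ι R : Type*} [Fintype ι] [DecidableEq ι]
    [CommRing R] {Q : Matrix ι ι R} (hQ : Q.IsSymm) (hQu : IsUnit Q)
    (v w : ι → R) (t : R) :
    (v - t • Q *ᵥ w) ⬝ᵥ (Q⁻¹ *ᵥ (v - t • Q *ᵥ w)) =
      v ⬝ᵥ (Q⁻¹ *ᵥ v) - 2 * t * (w ⬝ᵥ v) + t * t * (w ⬝ᵥ (Q *ᵥ w)) := by
  have hinv : Q⁻¹ *ᵥ Q *ᵥ w = w := by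
    rw [mulVec_mulVec, nonsing_inv_mul _ ((isUnit_iff_isUnit_det Q).mp hQu), one_mulVec]
  have hsymm : (Q *ᵥ w) ⬝ᵥ (Q⁻¹ *ᵥ v) = w ⬝ᵥ v := by
    rw [dotProduct_mulVec, ← mulVec_transpose, hQ.inv.eq, hinv]
  simp only [mulVec_sub, mulVec_smul, hinv, dotProduct_sub, sub_dotProduct, dotProduct_smul,
    smul_dotProduct, hsymm, smul_eq_mul, dotProduct_comm v w, dotProduct_comm (Q *ᵥ w) w]
  ring

section SdpBlocks

variable {n m : ℕ} (x : Fin m → (Fin n → ℝ)) (P : Fin m → Matrix (Fin n) (Fin n) ℝ)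
  (P₀ : Matrix (Fin n) (Fin n) ℝ) (xt : Fin n → ℝ) (lam : Fin m → ℝ)

theorem isHermitian_sdpBlockN (hP : ∀ i, (P i).IsHermitian) (hP₀ : P₀.IsHermitian) :
    (sdpBlockN x P P₀ xt lam).IsHermitian := by
  have hsum : (∑ i, lam i • (P i)⁻¹).IsHermitian :=
    isSelfAdjoint_sum _ fun i _ => (hP i).inv.smul (.all (lam i))
  rw [sdpBlockN, isHermitian_fromBlocks_iff]
  exact ⟨hsum.sub hP₀.inv, by simp, by simp, by ext; simp⟩

theorem dotProduct_sdpBlockK_mulVec (hP₀ : P₀.IsSymm) (hP₀u : IsUnit P₀) (u v : Fin n → ℝ)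
    (t : ℝ) :
    (u ⊕ᵥ ((fun _ => t) ⊕ᵥ v)) ⬝ᵥ (sdpBlockK x P P₀ xt lam *ᵥ (u ⊕ᵥ ((fun _ => t) ⊕ᵥ v))) =
      -((u ⊕ᵥ fun _ => t) ⬝ᵥ (sdpBlockN x P P₀ xt lam *ᵥ (u ⊕ᵥ fun _ => t)))
        - (v - t • P₀ *ᵥ xt) ⬝ᵥ (P₀⁻¹ *ᵥ (v - t • P₀ *ᵥ xt)) := by
  rw [sub_smul_mulVec_dotProduct_inv_mulVec hP₀ hP₀u]
  simp only [sdpBlockK, sdpBlockN, sumElim_dotProduct_fromBlocks_mulVec_sumElim,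
    dotProduct_replicateCol_mulVec_const, const_dotProduct_replicateRow_mulVec,
    const_dotProduct_of_const_mulVec_const, fromCols_mulVec_sumElim, fromRows_mulVec,
    sumElim_dotProduct_sumElim, zero_mulVec, dotProduct_zero, add_zero, sub_mulVec, neg_mulVec,
    dotProduct_sub, dotProduct_neg, sub_dotProduct, neg_add_eq_sub]
  ring

end SdpBlocks

theorem sdp_LMI_iff_reduced_LMI_general (n m : ℕ)
    (x : Fin m → (Fin n → ℝ)) (P : Fin m → Matrix (Fin n) (Fin n) ℝ)
    (hP : ∀ i, (P i).PosDef)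
    (P₀ : Matrix (Fin n) (Fin n) ℝ) (hP₀ : P₀.PosDef) (xt : Fin n → ℝ)
    (lam : Fin m → ℝ) :
    (∀ ζ : (Fin n ⊕ (Unit ⊕ Fin n)) → ℝ,
        ζ ⬝ᵥ (sdpBlockK x P P₀ xt lam *ᵥ ζ) ≤ 0) ↔
      (sdpBlockN x P P₀ xt lam).PosSemidef := by
  have hsymm : P₀.IsSymm := isHermitian_iff_isSymm.mp hP₀.isHermitian
  constructor
  · intro hK
    refine .of_dotProduct_mulVec_nonneg
      (isHermitian_sdpBlockN x P P₀ xt lam (fun i => (hP i).isHermitian) hP₀.isHermitian)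
      fun z => ?_
    rw [star_trivial]
    obtain ⟨u, t, rfl⟩ : ∃ u t, z = u ⊕ᵥ fun _ => t :=
      ⟨z ∘ Sum.inl, z (Sum.inr ()), by ext (i | ⟨⟩) <;> rfl⟩
    have h := hK (u ⊕ᵥ ((fun _ => t) ⊕ᵥ t • P₀ *ᵥ xt))
    rwa [dotProduct_sdpBlockK_mulVec x P P₀ xt lam hsymm hP₀.isUnit, sub_self,
      zero_dotProduct, sub_zero, neg_nonpos] at h
  · intro hN ζ
    obtain ⟨u, t, v, rfl⟩ : ∃ u t v, ζ = u ⊕ᵥ ((fun _ => t) ⊕ᵥ v) :=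
      ⟨ζ ∘ Sum.inl, ζ (Sum.inr (Sum.inl ())), ζ ∘ Sum.inr ∘ Sum.inr,
        by ext (i | ⟨⟩ | i) <;> rfl⟩
    have hN' := hN.dotProduct_mulVec_nonneg (u ⊕ᵥ fun _ => t)
    have hsq := hP₀.inv.posSemidef.dotProduct_mulVec_nonneg (v - t • P₀ *ᵥ xt)
    rw [star_trivial] at hN' hsq
    rw [dotProduct_sdpBlockK_mulVec x P P₀ xt lam hsymm hP₀.isUnit]
    linarith

/-- (Schur-complement reduction of the SDP-relaxation LMI) `K(P₀, x̃₀, λ)` is negative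
semidefinite if and only if `N(P₀, x̃₀, λ)` is positive semidefinite. -/
theorem sdp_LMI_iff_reduced_LMI (n m : ℕ) (hn : 0 < n) (hm : 0 < m)
    (x : Fin m → (Fin n → ℝ)) (P : Fin m → Matrix (Fin n) (Fin n) ℝ)
    (hP : ∀ i, (P i).PosDef)
    (P₀ : Matrix (Fin n) (Fin n) ℝ) (hP₀ : P₀.PosDef) (xt : Fin n → ℝ)
    (lam : Fin m → ℝ) (hlam : ∀ i, 0 ≤ lam i) :
    (∀ ζ : (Fin n ⊕ (Unit ⊕ Fin n)) → ℝ,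
        ζ ⬝ᵥ (sdpBlockK x P P₀ xt lam *ᵥ ζ) ≤ 0) ↔
      (sdpBlockN x P P₀ xt lam).PosSemidef :=
  sdp_LMI_iff_reduced_LMI_general n m x P hP P₀ hP₀ xt lam
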